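/- For every M > 0 and integers m, q, n ≥ 0 with m + q + n > 0 there exists a constant C, depending only on m, q, n, M, such that |∂_σⁿ ∂_τ^q ∂ₖᵐ u^{BS}(σ;τ,x,k)| ≤ C·e^k·σ^{−n+2q}·(σ√τ)^{1−m−2q} for all x, k ∈ ℝ and all σ, τ > 0 with σ√τ ≤ M. -/

import Mathlib

/-!
Write `v = σ√τ` and `d = (x - k - v²/2)/v`, so that `d₊ = d + v` and `u^{BS}` depends on `(σ, τ)`
only through `v`. The identity `eˣ 𝒩'(d + v) = eᵏ 𝒩'(d)` gives `∂ₖu = -eᵏ 𝒩(d)` and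
`∂ᵥu = eᵏ 𝒩'(d)`. Call a function of order `t` if it is a linear combination of
`eᵏ vᵃ dⁱ e^{-d²/2}` and `eᵏ vᵃ 𝒩(d)` with `a ≥ t`; it is then bounded by `C eᵏ vᵗ` for `v ≤ M`.
As `∂ₖd = -1/v` and `∂ᵥd = -d/v - 1`, both `∂ₖ` and `∂ᵥ` lower the order by one. By the chain
rule `∂_τ = (σ²/2v) ∂ᵥ` lowers it by two at the cost of a factor `σ²`, and
`∂_σ (σᵇ F(v)) = σ^{b-1} (b F + v ∂ᵥF)` keeps it while lowering the power of `σ`. So the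
derivative in question is `σ^{2q-n}` times a function of order `1 - m - 2q`.
-/

noncomputable def Gauss (t x : ℝ) : ℝ :=
  (Real.sqrt (2 * Real.pi * t))⁻¹ * Real.exp (-x ^ 2 / (2 * t))

/-- Standard normal cumulative distribution function. -/
noncomputable def normalCDF (x : ℝ) : ℝ :=
  (Real.sqrt (2 * Real.pi))⁻¹ * ∫ s in Set.Iic x, Real.exp (-s ^ 2 / 2)

/-- Black–Scholes call price `u^{BS}(σ; τ, x, k)` in log variables. -/
noncomputable def uBS (σ τ x k : ℝ) : ℝ :=
  Real.exp x * normalCDF ((x - k + σ ^ 2 * τ / 2) / (σ * Real.sqrt τ)) -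
    Real.exp k * normalCDF ((x - k - σ ^ 2 * τ / 2) / (σ * Real.sqrt τ))

open Real Set

lemma integrable_exp_neg_sq_div_two : MeasureTheory.Integrable fun s : ℝ => exp (-s ^ 2 / 2) := by
  simpa [div_eq_inv_mul] using integrable_exp_neg_mul_sq (by norm_num : (0 : ℝ) < 1 / 2)

lemma hasDerivAt_normalCDF (d : ℝ) :
    HasDerivAt normalCDF ((√(2 * π))⁻¹ * exp (-d ^ 2 / 2)) d := by
  have hcont : Continuous fun s : ℝ => exp (-s ^ 2 / 2) := by fun_prop
  have hsplit : ∀ y, normalCDF y = (√(2 * π))⁻¹ *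
      ((∫ s in Iic 0, exp (-s ^ 2 / 2)) + ∫ s in (0 : ℝ)..y, exp (-s ^ 2 / 2)) := fun y => by
    rw [normalCDF, ← intervalIntegral.integral_Iic_sub_Iic
      integrable_exp_neg_sq_div_two.integrableOn integrable_exp_neg_sq_div_two.integrableOn]
    ring
  rw [funext hsplit]
  exact ((intervalIntegral.integral_hasDerivAt_right
    integrable_exp_neg_sq_div_two.intervalIntegrable (hcont.stronglyMeasurableAtFilter _ _)
    hcont.continuousAt).const_add _).const_mul _

lemma abs_normalCDF_le_one (d : ℝ) : |normalCDF d| ≤ 1 := by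
  have hle : ∫ s in Iic d, exp (-s ^ 2 / 2) ≤ √(2 * π) := by
    calc ∫ s in Iic d, exp (-s ^ 2 / 2) ≤ ∫ s, exp (-s ^ 2 / 2) :=
          MeasureTheory.setIntegral_le_integral integrable_exp_neg_sq_div_two
            (Filter.Eventually.of_forall fun s => (exp_pos _).le)
      _ = √(2 * π) := by
          simpa [div_eq_inv_mul, show π / 2⁻¹ = 2 * π by ring] using integral_gaussian (1 / 2)
  have hnonneg : 0 ≤ ∫ s in Iic d, exp (-s ^ 2 / 2) :=
    MeasureTheory.integral_nonneg fun s => (exp_pos _).le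
  have hpos : 0 < √(2 * π) := by positivity
  rw [abs_le, normalCDF]
  constructor
  · nlinarith [inv_pos.2 hpos]
  · rwa [inv_mul_le_iff₀ hpos, mul_one]

noncomputable def gaussMoment (i : ℕ) (d : ℝ) : ℝ := d ^ i * exp (-d ^ 2 / 2)

lemma hasDerivAt_gaussMoment (i : ℕ) (d : ℝ) :
    HasDerivAt (gaussMoment i) (i * gaussMoment (i - 1) d - gaussMoment (i + 1) d) d := by
  have hsq : HasDerivAt (fun d : ℝ => -d ^ 2 / 2) (-d) d := by
    simpa using ((hasDerivAt_pow 2 d).fun_neg.div_const 2).congr_deriv (by ring)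
  refine ((hasDerivAt_pow i d).mul hsq.exp).congr_deriv ?_
  simp only [gaussMoment]
  ring

lemma natCast_mul_mul_gaussMoment_pred (i : ℕ) (d : ℝ) :
    i * (d * gaussMoment (i - 1) d) = i * gaussMoment i d := by
  cases i with
  | zero => simp
  | succ j => simp only [gaussMoment, Nat.add_sub_cancel, pow_succ]; ring

lemma abs_gaussMoment_le (i : ℕ) (d : ℝ) : |gaussMoment i d| ≤ i.factorial * exp (1 / 2) := by
  have hpow : |d| ^ i ≤ i.factorial * exp |d| := by
    have := pow_div_factorial_le_exp _ (abs_nonneg d) i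
    rwa [div_le_iff₀ (by positivity), mul_comm] at this
  calc |gaussMoment i d| = |d| ^ i * exp (-d ^ 2 / 2) := by
        rw [gaussMoment, abs_mul, abs_pow, abs_of_pos (exp_pos _)]
    _ ≤ i.factorial * exp |d| * exp (-d ^ 2 / 2) := by gcongr
    _ = i.factorial * exp (|d| - d ^ 2 / 2) := by rw [mul_assoc, ← exp_add]; ring_nf
    _ ≤ i.factorial * exp (1 / 2) := by
        gcongr
        nlinarith [sq_nonneg (|d| - 1), sq_abs d]

noncomputable def dMinus (x k v : ℝ) : ℝ := (x - k - v ^ 2 / 2) / v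

lemma hasDerivAt_dMinus_k (x : ℝ) {v : ℝ} (hv : v ≠ 0) (k : ℝ) :
    HasDerivAt (fun k' => dMinus x k' v) (-v⁻¹) k := by
  refine ((((hasDerivAt_id k).const_sub x).sub_const (v ^ 2 / 2)).div_const v).congr_deriv ?_
  field_simp

lemma hasDerivAt_dMinus_v (x k : ℝ) {v : ℝ} (hv : v ≠ 0) :
    HasDerivAt (fun v' => dMinus x k v') (-(dMinus x k v / v) - 1) v := by
  have hnum : HasDerivAt (fun v' : ℝ => x - k - v' ^ 2 / 2) (-v) v := by
    simpa using ((hasDerivAt_pow 2 v).div_const 2).const_sub (x - k) |>.congr_deriv (by ring)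
  refine (hnum.div (hasDerivAt_id v) hv).congr_deriv ?_
  simp only [dMinus, id]
  field_simp
  ring

noncomputable def gaussTerm (a : ℤ) (i : ℕ) (x k v : ℝ) : ℝ :=
  exp k * v ^ a * gaussMoment i (dMinus x k v)

noncomputable def cdfTerm (a : ℤ) (x k v : ℝ) : ℝ :=
  exp k * v ^ a * normalCDF (dMinus x k v)

def orderSpan (t : ℤ) : Submodule ℝ (ℝ → ℝ → ℝ → ℝ) :=
  Submodule.span ℝ
    ({gaussTerm a i | (a : ℤ) (i : ℕ) (_ : t ≤ a)} ∪ {cdfTerm a | (a : ℤ) (_ : t ≤ a)})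

lemma gaussTerm_mem_orderSpan {t a : ℤ} (h : t ≤ a) (i : ℕ) : gaussTerm a i ∈ orderSpan t :=
  Submodule.subset_span (Or.inl ⟨a, i, h, rfl⟩)

lemma cdfTerm_mem_orderSpan {t a : ℤ} (h : t ≤ a) : cdfTerm a ∈ orderSpan t :=
  Submodule.subset_span (Or.inr ⟨a, h, rfl⟩)

lemma hasDerivAt_gaussTerm_k (a : ℤ) (i : ℕ) (x : ℝ) {v : ℝ} (hv : v ≠ 0) (k : ℝ) :
    HasDerivAt (fun k' => gaussTerm a i x k' v)
      ((gaussTerm a i - (i : ℝ) • gaussTerm (a - 1) (i - 1) + gaussTerm (a - 1) (i + 1))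
        x k v) k := by
  have h := ((hasDerivAt_exp k).mul_const (v ^ a)).mul
    ((hasDerivAt_gaussMoment i _).comp k (hasDerivAt_dMinus_k x hv k))
  refine h.congr_deriv ?_
  simp only [gaussTerm, Pi.add_apply, Pi.sub_apply, Pi.smul_apply, smul_eq_mul,
    Function.comp_apply, zpow_sub_one₀ hv]
  ring

lemma hasDerivAt_cdfTerm_k (a : ℤ) (x : ℝ) {v : ℝ} (hv : v ≠ 0) (k : ℝ) :
    HasDerivAt (fun k' => cdfTerm a x k' v)
      ((cdfTerm a - (√(2 * π))⁻¹ • gaussTerm (a - 1) 0) x k v) k := by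
  have h := ((hasDerivAt_exp k).mul_const (v ^ a)).mul
    ((hasDerivAt_normalCDF _).comp k (hasDerivAt_dMinus_k x hv k))
  refine h.congr_deriv ?_
  simp only [cdfTerm, gaussTerm, gaussMoment, Pi.sub_apply, Pi.smul_apply, smul_eq_mul,
    Function.comp_apply, zpow_sub_one₀ hv]
  ring

lemma hasDerivAt_gaussTerm_v (a : ℤ) (i : ℕ) (x k : ℝ) {v : ℝ} (hv : v ≠ 0) :
    HasDerivAt (fun v' => gaussTerm a i x k v')
      (((a - i : ℝ) • gaussTerm (a - 1) i - (i : ℝ) • gaussTerm a (i - 1) +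
        gaussTerm (a - 1) (i + 2) + gaussTerm a (i + 1)) x k v) v := by
  have h := ((hasDerivAt_zpow a v (Or.inl hv)).const_mul (exp k)).mul
    ((hasDerivAt_gaussMoment i _).comp v (hasDerivAt_dMinus_v x k hv))
  refine h.congr_deriv ?_
  have hshift : dMinus x k v * gaussMoment (i + 1) (dMinus x k v) =
      gaussMoment (i + 2) (dMinus x k v) := by simp only [gaussMoment]; ring
  have hpred := natCast_mul_mul_gaussMoment_pred i (dMinus x k v)
  simp only [gaussTerm, Pi.add_apply, Pi.sub_apply, Pi.smul_apply, smul_eq_mul,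
    Function.comp_apply, zpow_sub_one₀ hv]
  linear_combination (exp k * v ^ a * v⁻¹) * (hshift - hpred)

lemma hasDerivAt_cdfTerm_v (a : ℤ) (x k : ℝ) {v : ℝ} (hv : v ≠ 0) :
    HasDerivAt (fun v' => cdfTerm a x k v')
      (((a : ℝ) • cdfTerm (a - 1) - (√(2 * π))⁻¹ • gaussTerm (a - 1) 1 -
        (√(2 * π))⁻¹ • gaussTerm a 0) x k v) v := by
  have h := ((hasDerivAt_zpow a v (Or.inl hv)).const_mul (exp k)).mul
    ((hasDerivAt_normalCDF _).comp v (hasDerivAt_dMinus_v x k hv))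
  refine h.congr_deriv ?_
  simp only [cdfTerm, gaussTerm, gaussMoment, Pi.sub_apply, Pi.smul_apply, smul_eq_mul,
    Function.comp_apply, zpow_sub_one₀ hv]
  ring

lemma exists_rel_mem_of_mem_span {A E E' : Type*} [Semiring A] [AddCommMonoid E] [Module A E]
    [AddCommMonoid E'] [Module A E'] {S : Set E} {N : Submodule A E'} (R : E → E' → Prop)
    (hzero : R 0 0) (hadd : ∀ F₁ F₂ G₁ G₂, R F₁ G₁ → R F₂ G₂ → R (F₁ + F₂) (G₁ + G₂))
    (hsmul : ∀ (c : A) F G, R F G → R (c • F) (c • G)) (hS : ∀ F ∈ S, ∃ G ∈ N, R F G)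
    {F : E} (hF : F ∈ Submodule.span A S) : ∃ G ∈ N, R F G := by
  induction hF using Submodule.span_induction with
  | mem F hF => exact hS F hF
  | zero => exact ⟨0, N.zero_mem, hzero⟩
  | add F₁ F₂ _ _ h₁ h₂ =>
    obtain ⟨G₁, hG₁, hR₁⟩ := h₁
    obtain ⟨G₂, hG₂, hR₂⟩ := h₂
    exact ⟨G₁ + G₂, N.add_mem hG₁ hG₂, hadd _ _ _ _ hR₁ hR₂⟩
  | smul c F _ h =>
    obtain ⟨G, hG, hR⟩ := h
    exact ⟨c • G, N.smul_mem c hG, hsmul _ _ _ hR⟩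

-- Stated off `v = 0` only: there `v ^ j * v ^ a = v ^ (a + j)` can fail for integer powers.
lemma exists_zpow_mul_eq_mem_orderSpan (j : ℤ) {t : ℤ} {F : ℝ → ℝ → ℝ → ℝ}
    (hF : F ∈ orderSpan t) :
    ∃ G ∈ orderSpan (t + j), ∀ x k v, v ≠ 0 → v ^ j * F x k v = G x k v := by
  refine exists_rel_mem_of_mem_span
    (fun (F G : ℝ → ℝ → ℝ → ℝ) => ∀ x k v, v ≠ 0 → v ^ j * F x k v = G x k v)
    (by simp) (fun _ _ _ _ h₁ h₂ x k v hv => by simp [← h₁ x k v hv, ← h₂ x k v hv, mul_add])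
    (fun c _ _ h x k v hv => by simp [← h x k v hv, mul_left_comm]) ?_ hF
  rintro _ (⟨a, i, ha, rfl⟩ | ⟨a, ha, rfl⟩)
  · refine ⟨gaussTerm (a + j) i, gaussTerm_mem_orderSpan (by omega) i, fun x k v hv => ?_⟩
    simp only [gaussTerm, zpow_add₀ hv]
    ring
  · refine ⟨cdfTerm (a + j), cdfTerm_mem_orderSpan (by omega), fun x k v hv => ?_⟩
    simp only [cdfTerm, zpow_add₀ hv]
    ring

lemma exists_hasDerivAt_k_mem_orderSpan {t : ℤ} {F : ℝ → ℝ → ℝ → ℝ} (hF : F ∈ orderSpan t) :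
    ∃ G ∈ orderSpan (t - 1), ∀ x k v, v ≠ 0 → HasDerivAt (fun k' => F x k' v) (G x k v) k := by
  refine exists_rel_mem_of_mem_span
    (fun (F G : ℝ → ℝ → ℝ → ℝ) => ∀ x k v, v ≠ 0 → HasDerivAt (fun k' => F x k' v) (G x k v) k)
    (fun _ k _ _ => hasDerivAt_const k 0)
    (fun _ _ _ _ h₁ h₂ x k v hv => (h₁ x k v hv).add (h₂ x k v hv))
    (fun c _ _ h x k v hv => (h x k v hv).const_mul c) ?_ hF
  rintro _ (⟨a, i, ha, rfl⟩ | ⟨a, ha, rfl⟩)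
  · refine ⟨_, ?_, fun x k v hv => hasDerivAt_gaussTerm_k a i x hv k⟩
    refine add_mem (sub_mem ?_ (Submodule.smul_mem _ _ ?_)) ?_ <;>
      exact gaussTerm_mem_orderSpan (by omega) _
  · refine ⟨_, ?_, fun x k v hv => hasDerivAt_cdfTerm_k a x hv k⟩
    exact sub_mem (cdfTerm_mem_orderSpan (by omega))
      (Submodule.smul_mem _ _ (gaussTerm_mem_orderSpan (by omega) _))

lemma exists_hasDerivAt_v_mem_orderSpan {t : ℤ} {F : ℝ → ℝ → ℝ → ℝ} (hF : F ∈ orderSpan t) :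
    ∃ G ∈ orderSpan (t - 1), ∀ x k v, v ≠ 0 → HasDerivAt (fun v' => F x k v') (G x k v) v := by
  refine exists_rel_mem_of_mem_span
    (fun (F G : ℝ → ℝ → ℝ → ℝ) => ∀ x k v, v ≠ 0 → HasDerivAt (fun v' => F x k v') (G x k v) v)
    (fun _ _ v _ => hasDerivAt_const v 0)
    (fun _ _ _ _ h₁ h₂ x k v hv => (h₁ x k v hv).add (h₂ x k v hv))
    (fun c _ _ h x k v hv => (h x k v hv).const_mul c) ?_ hF
  rintro _ (⟨a, i, ha, rfl⟩ | ⟨a, ha, rfl⟩)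
  · refine ⟨_, ?_, fun x k v hv => hasDerivAt_gaussTerm_v a i x k hv⟩
    refine add_mem (add_mem (sub_mem (Submodule.smul_mem _ _ ?_) (Submodule.smul_mem _ _ ?_))
      ?_) ?_ <;> exact gaussTerm_mem_orderSpan (by omega) _
  · refine ⟨_, ?_, fun x k v hv => hasDerivAt_cdfTerm_v a x k hv⟩
    refine sub_mem (sub_mem (Submodule.smul_mem _ _ (cdfTerm_mem_orderSpan (by omega)))
      (Submodule.smul_mem _ _ ?_)) (Submodule.smul_mem _ _ ?_) <;>
      exact gaussTerm_mem_orderSpan (by omega) _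

lemma zpow_le_pow_mul_zpow {v M : ℝ} (hv : 0 < v) (hvM : v ≤ M) {t a : ℤ} (hta : t ≤ a) :
    v ^ a ≤ M ^ (a - t).toNat * v ^ t := by
  have hexp : a = ((a - t).toNat : ℤ) + t := by omega
  calc v ^ a = v ^ (a - t).toNat * v ^ t := by
        conv_lhs => rw [hexp, zpow_add₀ hv.ne', zpow_natCast]
    _ ≤ M ^ (a - t).toNat * v ^ t := by gcongr

lemma abs_gaussTerm_le {t a : ℤ} (ha : t ≤ a) (i : ℕ) {x k v M : ℝ} (hv : 0 < v) (hvM : v ≤ M) :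
    |gaussTerm a i x k v| ≤ i.factorial * exp (1 / 2) * M ^ (a - t).toNat * (exp k * v ^ t) := by
  have hM : 0 < M := hv.trans_le hvM
  calc |gaussTerm a i x k v| = exp k * v ^ a * |gaussMoment i (dMinus x k v)| := by
        rw [gaussTerm, abs_mul, abs_of_pos (by positivity)]
    _ ≤ exp k * (M ^ (a - t).toNat * v ^ t) * (i.factorial * exp (1 / 2)) :=
        mul_le_mul (by gcongr; exact zpow_le_pow_mul_zpow hv hvM ha)
          (abs_gaussMoment_le i _) (abs_nonneg _) (by positivity)
    _ = _ := by ring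

lemma abs_cdfTerm_le {t a : ℤ} (ha : t ≤ a) {x k v M : ℝ} (hv : 0 < v) (hvM : v ≤ M) :
    |cdfTerm a x k v| ≤ M ^ (a - t).toNat * (exp k * v ^ t) := by
  have hM : 0 < M := hv.trans_le hvM
  calc |cdfTerm a x k v| = exp k * v ^ a * |normalCDF (dMinus x k v)| := by
        rw [cdfTerm, abs_mul, abs_of_pos (by positivity)]
    _ ≤ exp k * (M ^ (a - t).toNat * v ^ t) * 1 :=
        mul_le_mul (by gcongr; exact zpow_le_pow_mul_zpow hv hvM ha)
          (abs_normalCDF_le_one _) (abs_nonneg _) (by positivity)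
    _ = _ := by ring

lemma exists_bound_of_mem_orderSpan {t : ℤ} {F : ℝ → ℝ → ℝ → ℝ} (hF : F ∈ orderSpan t) (M : ℝ) :
    ∃ C, ∀ x k v, 0 < v → v ≤ M → |F x k v| ≤ C * (exp k * v ^ t) := by
  induction hF using Submodule.span_induction with
  | mem F hF =>
    rcases hF with ⟨a, i, ha, rfl⟩ | ⟨a, ha, rfl⟩
    · exact ⟨_, fun x k v hv hvM => abs_gaussTerm_le ha i hv hvM⟩
    · exact ⟨_, fun x k v hv hvM => abs_cdfTerm_le ha hv hvM⟩
  | zero => exact ⟨0, fun x k v _ _ => by simp⟩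
  | add F₁ F₂ _ _ h₁ h₂ =>
    obtain ⟨C₁, hC₁⟩ := h₁
    obtain ⟨C₂, hC₂⟩ := h₂
    refine ⟨C₁ + C₂, fun x k v hv hvM => ?_⟩
    calc |(F₁ + F₂) x k v| ≤ |F₁ x k v| + |F₂ x k v| := abs_add_le _ _
      _ ≤ C₁ * (exp k * v ^ t) + C₂ * (exp k * v ^ t) :=
          add_le_add (hC₁ x k v hv hvM) (hC₂ x k v hv hvM)
      _ = (C₁ + C₂) * (exp k * v ^ t) := by ring
  | smul c F _ h =>
    obtain ⟨C, hC⟩ := h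
    refine ⟨|c| * C, fun x k v hv hvM => ?_⟩
    calc |(c • F) x k v| = |c| * |F x k v| := by simp [abs_mul]
      _ ≤ |c| * (C * (exp k * v ^ t)) := by gcongr; exact hC x k v hv hvM
      _ = |c| * C * (exp k * v ^ t) := by ring

noncomputable def bsPrice (x k v : ℝ) : ℝ :=
  exp x * normalCDF (dMinus x k v + v) - exp k * normalCDF (dMinus x k v)

lemma uBS_eq_bsPrice (x k : ℝ) {σ τ : ℝ} (hσ : 0 < σ) (hτ : 0 < τ) :
    uBS σ τ x k = bsPrice x k (σ * √τ) := by
  have hv : σ * √τ ≠ 0 := by positivity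
  have hsq : σ ^ 2 * τ = (σ * √τ) ^ 2 := by rw [mul_pow, sq_sqrt hτ.le]
  rw [uBS, bsPrice, dMinus, hsq]
  congr 3
  field_simp
  ring

lemma exp_mul_exp_neg_sq_dPlus (x k : ℝ) {v : ℝ} (hv : v ≠ 0) :
    exp x * exp (-(dMinus x k v + v) ^ 2 / 2) = exp k * exp (-dMinus x k v ^ 2 / 2) := by
  rw [← exp_add, ← exp_add, dMinus]
  congr 1
  field_simp
  ring

lemma hasDerivAt_bsPrice_k (x : ℝ) {v : ℝ} (hv : v ≠ 0) (k : ℝ) :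
    HasDerivAt (fun k' => bsPrice x k' v) ((-cdfTerm 0) x k v) k := by
  have hd := hasDerivAt_dMinus_k x hv k
  have h := (((hasDerivAt_normalCDF _).comp k (hd.add_const v)).const_mul (exp x)).sub
    ((hasDerivAt_exp k).mul ((hasDerivAt_normalCDF _).comp k hd))
  refine h.congr_deriv ?_
  have hid := exp_mul_exp_neg_sq_dPlus x k hv
  simp only [cdfTerm, Pi.neg_apply, zpow_zero, mul_one, Function.comp_apply]
  linear_combination (-(√(2 * π))⁻¹ * v⁻¹) * hid

lemma hasDerivAt_bsPrice_v (x k : ℝ) {v : ℝ} (hv : v ≠ 0) :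
    HasDerivAt (fun v' => bsPrice x k v') (((√(2 * π))⁻¹ • gaussTerm 0 0) x k v) v := by
  have hd := hasDerivAt_dMinus_v x k hv
  have h := (((hasDerivAt_normalCDF _).comp v (hd.fun_add (hasDerivAt_id' v))).const_mul
    (exp x)).sub (((hasDerivAt_normalCDF _).comp v hd).const_mul (exp k))
  refine h.congr_deriv ?_
  have hid := exp_mul_exp_neg_sq_dPlus x k hv
  simp only [gaussTerm, gaussMoment, Pi.smul_apply, smul_eq_mul, zpow_zero, mul_one, pow_zero,
    one_mul]
  linear_combination (√(2 * π))⁻¹ * (-(dMinus x k v / v)) * hid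

lemma iteratedDeriv_succ_eqOn {f g g' : ℝ → ℝ} {U : Set ℝ} (hU : IsOpen U) (hfg : EqOn f g U)
    (hg : ∀ s ∈ U, HasDerivAt g (g' s) s) (n : ℕ) :
    EqOn (iteratedDeriv (n + 1) f) (iteratedDeriv n g') U := by
  rw [iteratedDeriv_succ']
  refine EqOn.iteratedDeriv_of_isOpen (fun s hs => ?_) hU n
  rw [(hfg.eventuallyEq_of_mem (hU.mem_nhds hs)).deriv_eq]
  exact (hg s hs).deriv

lemma HasDerivAt.comp_mul_sqrt {f : ℝ → ℝ} {f' σ τ : ℝ} (hσ : σ ≠ 0) (hτ : 0 < τ)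
    (hf : HasDerivAt f f' (σ * √τ)) :
    HasDerivAt (fun τ' => f (σ * √τ')) (σ ^ 2 * (2⁻¹ * ((σ * √τ)⁻¹ * f'))) τ := by
  refine (hf.comp τ ((hasDerivAt_sqrt hτ.ne').const_mul σ)).congr_deriv ?_
  have : √τ ≠ 0 := by positivity
  field_simp

lemma HasDerivAt.zpow_mul_comp_mul_const {f : ℝ → ℝ} {f' σ : ℝ} (b : ℤ) (hσ : σ ≠ 0) (c : ℝ)
    (hf : HasDerivAt f f' (σ * c)) :
    HasDerivAt (fun σ' => σ' ^ b * f (σ' * c)) (σ ^ (b - 1) * (b * f (σ * c) + σ * c * f')) σ := by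
  refine ((hasDerivAt_zpow b σ (Or.inl hσ)).mul
    (hf.comp σ ((hasDerivAt_id σ).mul_const c))).congr_deriv ?_
  simp only [zpow_sub_one₀ hσ, Function.comp_apply, id, one_mul]
  field_simp

lemma exists_iteratedDeriv_k_eq (m : ℕ) {t : ℤ} {F : ℝ → ℝ → ℝ → ℝ} (hF : F ∈ orderSpan t) :
    ∃ G ∈ orderSpan (t - m), ∀ x k v, v ≠ 0 → iteratedDeriv m (fun k' => F x k' v) k = G x k v := by
  induction m generalizing t F with
  | zero => exact ⟨F, by simpa using hF, fun x k v _ => by simp⟩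
  | succ m ih =>
    obtain ⟨F₁, hF₁, hderiv⟩ := exists_hasDerivAt_k_mem_orderSpan hF
    obtain ⟨G, hG, hGeq⟩ := ih hF₁
    refine ⟨G, by rwa [show t - ((m + 1 : ℕ) : ℤ) = t - 1 - m by push_cast; ring], ?_⟩
    intro x k v hv
    rw [iteratedDeriv_succ_eqOn isOpen_univ (eqOn_refl _ _) (fun k' _ => hderiv x k' v hv) m
      (mem_univ k)]
    exact hGeq x k v hv

lemma exists_iteratedDeriv_tau_eq (q : ℕ) {t : ℤ} {F : ℝ → ℝ → ℝ → ℝ} (hF : F ∈ orderSpan t) :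
    ∃ G ∈ orderSpan (t - 2 * q), ∀ x k σ τ, 0 < σ → 0 < τ → ∀ f : ℝ → ℝ,
      EqOn f (fun τ' => F x k (σ * √τ')) (Ioi 0) →
        iteratedDeriv q f τ = σ ^ (2 * q) * G x k (σ * √τ) := by
  induction q generalizing t F with
  | zero => exact ⟨F, by simpa using hF, fun x k σ τ _ hτ f hf => by simpa using hf hτ⟩
  | succ q ih =>
    obtain ⟨Fv, hFv, hderiv⟩ := exists_hasDerivAt_v_mem_orderSpan hF
    obtain ⟨F₁, hF₁, hF₁eq⟩ := exists_zpow_mul_eq_mem_orderSpan (-1) hFv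
    obtain ⟨G, hG, hGeq⟩ := ih (Submodule.smul_mem _ (2 : ℝ)⁻¹ hF₁)
    refine ⟨G, by rwa [show t - 2 * ((q + 1 : ℕ) : ℤ) = t - 1 + -1 - 2 * q by push_cast; ring],
      fun x k σ τ hσ hτ f hf => ?_⟩
    have hstep : ∀ τ' ∈ Ioi (0 : ℝ), HasDerivAt (fun τ' => F x k (σ * √τ'))
        (σ ^ 2 * ((2 : ℝ)⁻¹ • F₁) x k (σ * √τ')) τ' := fun τ' hτ' => by
      have hv : σ * √τ' ≠ 0 := by have : (0 : ℝ) < τ' := hτ'; positivity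
      convert (hderiv x k _ hv).comp_mul_sqrt hσ.ne' hτ' using 2
      simp only [Pi.smul_apply, smul_eq_mul, ← hF₁eq x k _ hv, zpow_neg_one]
    rw [iteratedDeriv_succ_eqOn isOpen_Ioi hf hstep q hτ, iteratedDeriv_const_mul_field,
      hGeq x k σ τ hσ hτ _ (eqOn_refl _ _)]
    ring

lemma exists_iteratedDeriv_sigma_eq (n : ℕ) (b : ℤ) {t : ℤ} {F : ℝ → ℝ → ℝ → ℝ}
    (hF : F ∈ orderSpan t) :
    ∃ G ∈ orderSpan t, ∀ x k σ τ, 0 < σ → 0 < τ → ∀ f : ℝ → ℝ,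
      EqOn f (fun σ' => σ' ^ b * F x k (σ' * √τ)) (Ioi 0) →
        iteratedDeriv n f σ = σ ^ (b - n) * G x k (σ * √τ) := by
  induction n generalizing b F with
  | zero => exact ⟨F, hF, fun x k σ τ hσ _ f hf => by simpa using hf hσ⟩
  | succ n ih =>
    obtain ⟨Fv, hFv, hderiv⟩ := exists_hasDerivAt_v_mem_orderSpan hF
    obtain ⟨F₁, hF₁, hF₁eq⟩ := exists_zpow_mul_eq_mem_orderSpan 1 hFv
    obtain ⟨G, hG, hGeq⟩ := ih (b - 1) (add_mem (Submodule.smul_mem _ (b : ℝ) hF)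
      (by rwa [sub_add_cancel] at hF₁))
    refine ⟨G, hG, fun x k σ τ hσ hτ f hf => ?_⟩
    have hstep : ∀ σ' ∈ Ioi (0 : ℝ), HasDerivAt (fun σ' => σ' ^ b * F x k (σ' * √τ))
        (σ' ^ (b - 1) * ((b : ℝ) • F + F₁) x k (σ' * √τ)) σ' := fun σ' hσ' => by
      have hσ' : (0 : ℝ) < σ' := hσ'
      have hv : σ' * √τ ≠ 0 := by positivity
      convert (hderiv x k _ hv).zpow_mul_comp_mul_const b hσ'.ne' (√τ) using 2
      simp only [Pi.add_apply, Pi.smul_apply, smul_eq_mul, ← hF₁eq x k _ hv, zpow_one]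
    rw [iteratedDeriv_succ_eqOn isOpen_Ioi hf hstep n hσ, hGeq x k σ τ hσ hτ _ (eqOn_refl _ _)]
    congr 1
    push_cast
    ring_nf

lemma exists_iteratedDeriv_k_bsPrice (m : ℕ) :
    ∃ G ∈ orderSpan (-m), ∀ x k v, v ≠ 0 →
      iteratedDeriv (m + 1) (fun k' => bsPrice x k' v) k = G x k v := by
  obtain ⟨G, hG, hGeq⟩ :=
    exists_iteratedDeriv_k_eq m (neg_mem (cdfTerm_mem_orderSpan (t := 0) le_rfl))
  refine ⟨G, by rwa [zero_sub] at hG, fun x k v hv => ?_⟩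
  rw [iteratedDeriv_succ_eqOn isOpen_univ (eqOn_refl _ _)
    (fun k' _ => hasDerivAt_bsPrice_k x hv k') m (mem_univ k)]
  exact hGeq x k v hv

lemma exists_iteratedDeriv_tau_uBS (q : ℕ) :
    ∃ G ∈ orderSpan (-1 - 2 * q), ∀ x k σ τ, 0 < σ → 0 < τ →
      iteratedDeriv (q + 1) (fun τ' => uBS σ τ' x k) τ = σ ^ (2 * (q + 1)) * G x k (σ * √τ) := by
  have hF₁ : ((√(2 * π))⁻¹ / 2) • gaussTerm (-1) 0 ∈ orderSpan (-1) :=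
    Submodule.smul_mem _ _ (gaussTerm_mem_orderSpan le_rfl 0)
  obtain ⟨G, hG, hGeq⟩ := exists_iteratedDeriv_tau_eq q hF₁
  refine ⟨G, hG, fun x k σ τ hσ hτ => ?_⟩
  have hstep : ∀ τ' ∈ Ioi (0 : ℝ), HasDerivAt (fun τ' => bsPrice x k (σ * √τ'))
      (σ ^ 2 * (((√(2 * π))⁻¹ / 2) • gaussTerm (-1) 0) x k (σ * √τ')) τ' := fun τ' hτ' => by
    have hτ' : (0 : ℝ) < τ' := hτ'
    have hv : σ * √τ' ≠ 0 := by positivity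
    convert (hasDerivAt_bsPrice_v x k hv).comp_mul_sqrt hσ.ne' hτ' using 2
    simp only [gaussTerm, Pi.smul_apply, smul_eq_mul, zpow_neg_one, zpow_zero]
    ring
  rw [iteratedDeriv_succ_eqOn isOpen_Ioi (fun τ' hτ' => uBS_eq_bsPrice x k hσ hτ') hstep q hτ,
    iteratedDeriv_const_mul_field, hGeq x k σ τ hσ hτ _ (eqOn_refl _ _)]
  ring

lemma exists_iteratedDeriv_sigma_uBS (n : ℕ) :
    ∃ G ∈ orderSpan 1, ∀ x k σ τ, 0 < σ → 0 < τ →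
      iteratedDeriv (n + 1) (fun σ' => uBS σ' τ x k) σ = σ ^ (-1 - n : ℤ) * G x k (σ * √τ) := by
  have hF₁ : (√(2 * π))⁻¹ • gaussTerm 1 0 ∈ orderSpan 1 :=
    Submodule.smul_mem _ _ (gaussTerm_mem_orderSpan le_rfl 0)
  obtain ⟨G, hG, hGeq⟩ := exists_iteratedDeriv_sigma_eq n (-1) hF₁
  refine ⟨G, hG, fun x k σ τ hσ hτ => ?_⟩
  have hstep : ∀ σ' ∈ Ioi (0 : ℝ), HasDerivAt (fun σ' => bsPrice x k (σ' * √τ))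
      (σ' ^ (-1 : ℤ) * ((√(2 * π))⁻¹ • gaussTerm 1 0) x k (σ' * √τ)) σ' := fun σ' hσ' => by
    have hσ' : (0 : ℝ) < σ' := hσ'
    have hv : σ' * √τ ≠ 0 := by positivity
    convert (hasDerivAt_bsPrice_v x k hv).zpow_mul_comp_mul_const 0 hσ'.ne' (√τ) using 1
    · simp
    · simp only [gaussTerm, Pi.smul_apply, smul_eq_mul, zpow_one, zpow_zero, zero_sub,
        Int.cast_zero, zero_mul, zero_add]
      ring
  rw [iteratedDeriv_succ_eqOn isOpen_Ioi (fun σ' hσ' => uBS_eq_bsPrice x k hσ' hτ) hstep n hσ,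
    hGeq x k σ τ hσ hτ _ (eqOn_refl _ _)]

lemma exists_iteratedDeriv_uBS_eq {m q n : ℕ} (hpos : 0 < m + q + n) :
    ∃ H ∈ orderSpan (1 - m - 2 * q), ∀ x k σ τ, 0 < σ → 0 < τ →
      iteratedDeriv n (fun σ' => iteratedDeriv q
        (fun τ' => iteratedDeriv m (fun k' => uBS σ' τ' x k') k) τ) σ =
        σ ^ (2 * q - n : ℤ) * H x k (σ * √τ) := by
  -- `u^{BS}` itself has no order (it grows like `eˣ`), so its first derivative is split off.
  rcases m with _ | m
  · rcases q with _ | q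
    · obtain ⟨n, rfl⟩ : ∃ n', n = n' + 1 := Nat.exists_eq_add_one.2 (by omega)
      obtain ⟨H, hH, hHeq⟩ := exists_iteratedDeriv_sigma_uBS n
      refine ⟨H, by simpa using hH, fun x k σ τ hσ hτ => ?_⟩
      simp only [iteratedDeriv_zero, hHeq x k σ τ hσ hτ]
      push_cast
      ring_nf
    · obtain ⟨G, hG, hGeq⟩ := exists_iteratedDeriv_tau_uBS q
      obtain ⟨H, hH, hHeq⟩ := exists_iteratedDeriv_sigma_eq n (2 * (q + 1) : ℕ) hG
      refine ⟨H, by convert hH using 2; push_cast; ring, fun x k σ τ hσ hτ => ?_⟩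
      simp only [iteratedDeriv_zero]
      rw [hHeq x k σ τ hσ hτ _ fun σ' hσ' => by
        simp only [zpow_natCast]; exact hGeq x k σ' τ hσ' hτ]
      push_cast
      ring_nf
  · obtain ⟨F, hF, hFeq⟩ := exists_iteratedDeriv_k_bsPrice m
    obtain ⟨G, hG, hGeq⟩ := exists_iteratedDeriv_tau_eq q hF
    obtain ⟨H, hH, hHeq⟩ := exists_iteratedDeriv_sigma_eq n (2 * q : ℕ) hG
    refine ⟨H, by convert hH using 2; push_cast; ring, fun x k σ τ hσ hτ => ?_⟩
    have hk : ∀ σ' τ', 0 < σ' → 0 < τ' → iteratedDeriv (m + 1) (fun k' => uBS σ' τ' x k') k =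
        F x k (σ' * √τ') := fun σ' τ' hσ' hτ' => by
      simp only [uBS_eq_bsPrice x _ hσ' hτ']
      exact hFeq x k _ (by positivity)
    rw [hHeq x k σ τ hσ hτ _ fun σ' hσ' => by
      simp only [zpow_natCast]; exact hGeq x k σ' τ hσ' hτ _ fun τ' hτ' => hk σ' τ' hσ' hτ']
    push_cast
    ring_nf

theorem stmt_10_general (M : ℝ) (m q n : ℕ) (hpos : 0 < m + q + n) :
    ∃ C > 0, ∀ x k σ τ : ℝ, 0 < σ → 0 < τ → σ * Real.sqrt τ ≤ M →
      |iteratedDeriv n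
          (fun σ' => iteratedDeriv q
            (fun τ' => iteratedDeriv m (fun k' => uBS σ' τ' x k') k) τ) σ| ≤
        C * Real.exp k * σ ^ (-(n : ℝ) + 2 * q) *
          (σ * Real.sqrt τ) ^ (1 - (m : ℝ) - 2 * q) := by
  obtain ⟨H, hH, hHeq⟩ := exists_iteratedDeriv_uBS_eq hpos
  obtain ⟨C, hC⟩ := exists_bound_of_mem_orderSpan hH M
  refine ⟨max C 1, by positivity, fun x k σ τ hσ hτ hvM => ?_⟩
  have hv : 0 < σ * √τ := by positivity
  have hσexp : -(n : ℝ) + 2 * q = ((2 * q - n : ℤ) : ℝ) := by push_cast; ring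
  have hvexp : 1 - (m : ℝ) - 2 * q = ((1 - m - 2 * q : ℤ) : ℝ) := by push_cast; ring
  rw [hHeq x k σ τ hσ hτ, abs_mul, abs_of_pos (zpow_pos hσ _), hσexp, hvexp, rpow_intCast,
    rpow_intCast]
  calc σ ^ (2 * q - n : ℤ) * |H x k (σ * √τ)|
      ≤ σ ^ (2 * q - n : ℤ) * (max C 1 * (exp k * (σ * √τ) ^ (1 - m - 2 * q : ℤ))) := by
        gcongr
        exact (hC x k _ hv hvM).trans (by gcongr; exact le_max_left _ _)
    _ = _ := by ring

theorem stmt_10 (M : ℝ) (hM : 0 < M) (m q n : ℕ) (hpos : 0 < m + q + n) :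
    ∃ C > 0, ∀ x k σ τ : ℝ, 0 < σ → 0 < τ → σ * Real.sqrt τ ≤ M →
      |iteratedDeriv n
          (fun σ' => iteratedDeriv q
            (fun τ' => iteratedDeriv m (fun k' => uBS σ' τ' x k') k) τ) σ| ≤
        C * Real.exp k * σ ^ (-(n : ℝ) + 2 * q) *
          (σ * Real.sqrt τ) ^ (1 - (m : ℝ) - 2 * q) :=
  stmt_10_general M m q n hpos
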